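/- Suppose greedy rationalization is run on a modular objective: p(y_t | y_S) = g(∑_{i∈S} w_i) for a strictly increasing function g and nonnegative weights w_i, with sufficiency holding iff ∑_{i∈S} w_i ≥ τ. Then the greedy algorithm selects indices in nonincreasing order of w_i, and its output is a minimum-cardinality sufficient set. -/
import Mathlib


/-- Greedy rationalization on a modular objective.  Sufficiency of
`S` holds iff `∑_{i∈S} w_i ≥ τ` (with `w ≥ 0` and `τ ≤ ∑ᵢ wᵢ`), and greedy adds
at each step an index of maximal weight among the remaining ones, stopping as
soon as sufficiency holds (after `m` steps).  Then greedy selects indices in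
nonincreasing order of weight, and its output is a minimum-cardinality
sufficient set: every sufficient `T` has `|T| ≥ m`. -/
theorem stmt14 (n : ℕ) (w : Fin n → ℝ) (hw : ∀ i, 0 ≤ w i) (τ : ℝ)
    (hτ : τ ≤ ∑ i : Fin n, w i) (g : ℕ → Fin n) (m : ℕ)
    (hstep : ∀ k, k < m →
      g k ∉ Finset.image g (Finset.range k) ∧
      ∀ j ∉ Finset.image g (Finset.range k), w j ≤ w (g k))
    (hterm : τ ≤ ∑ i ∈ Finset.image g (Finset.range m), w i)
    (hmin : ∀ k, k < m → ¬ (τ ≤ ∑ i ∈ Finset.image g (Finset.range k), w i)) :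
    (∀ k k', k ≤ k' → k' < m → w (g k') ≤ w (g k)) ∧
    (∀ T : Finset (Fin n), τ ≤ ∑ i ∈ T, w i → m ≤ T.card) := by
  constructor
  · intro k k' hkk' hk'm
    rcases eq_or_lt_of_le hkk' with rfl | hlt
    · exact le_refl _
    · have h1 := (hstep k' hk'm).1
      have h2 := (hstep k (lt_trans hlt hk'm)).2
      refine h2 _ ?_
      intro hmem
      exact h1 (Finset.image_subset_image (Finset.range_subset_range.mpr hlt.le) hmem)
  · have key : ∀ t, t ≤ m → ∀ T : Finset (Fin n), T.card ≤ t →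
        ∑ i ∈ T, w i ≤ ∑ i ∈ Finset.image g (Finset.range t), w i := by
      intro t
      induction t with
      | zero =>
        intro _ T hT
        simp [Finset.card_eq_zero.mp (Nat.le_zero.mp hT)]
      | succ t ih =>
        intro ht T hT
        have ht' : t ≤ m := Nat.le_of_succ_le ht
        have hgt : g t ∉ Finset.image g (Finset.range t) := (hstep t ht).1
        have himg : Finset.image g (Finset.range (t+1)) =
            insert (g t) (Finset.image g (Finset.range t)) := by
          rw [Finset.range_add_one, Finset.image_insert]
        rw [himg, Finset.sum_insert hgt]
        by_cases hsub : T ⊆ Finset.image g (Finset.range t)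
        · have h1 := Finset.sum_le_sum_of_subset_of_nonneg hsub
            (fun i _ _ => hw i)
          linarith [hw (g t)]
        · obtain ⟨a, haT, haG⟩ := Finset.not_subset.mp hsub
          have hsum : ∑ i ∈ T.erase a, w i + w a = ∑ i ∈ T, w i :=
            Finset.sum_erase_add T w haT
          have hcard : (T.erase a).card ≤ t := by
            have := Finset.card_erase_of_mem haT
            omega
          have h1 := ih ht' (T.erase a) hcard
          have h2 : w a ≤ w (g t) := (hstep t ht).2 a haG
          linarith
    intro T hT
    by_contra hlt
    push_neg at hlt
    exact hmin T.card hlt (le_trans hT (key T.card hlt.le T le_rfl))
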